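/- If ν is p-symmetric then its base-p digit reversal is also p-symmetric: writing ν = Σ_{i=0}^{s} ν_i p^i in base p with ν_s ≠ 0, the number ν' = Σ_{i=0}^{s} ν_{s-i} p^i is p-symmetric. -/

import Mathlib

/-! The digit reversal `rev` of `(p ^ k - 1) * ℓ` with `0 < ℓ < p ^ k` is again of this form:
written with `2k` digits, this number consists of two blocks of `k` digits that are digitwise
complementary, a property that survives reversal. The identity `s(ν * w) = s(ν) * s(w)` means that
multiplying the digit polynomials of `ν` and `w` produces no carries, so the digits of `ν * w` are
the coefficients of the product; as reflection of polynomials is multiplicative,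
`rev (ν * w) = rev ν * rev w`. Once the factors `p` are removed from `w`, reversal also preserves
all digit sums, so `rev w` is a witness for `rev ν`. -/

/-- Sum of the base-`p` digits of `n`. -/
def digitSum (p n : ℕ) : ℕ := (Nat.digits p n).sum

/-- An integer `ν > 1` coprime to `p` is `p`-symmetric if there exist positive
integers `w`, `k`, `ℓ` with `ℓ < p^k` such that `ν * w = (p^k - 1) * ℓ` and the
base-`p` product `ν * w` is carry-free, i.e. `s_p(ν*w) = s_p(ν) * s_p(w)`. -/
def IsPSymmetric (p ν : ℕ) : Prop :=
  1 < ν ∧ Nat.Coprime ν p ∧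
    ∃ w k ℓ : ℕ, 0 < w ∧ 0 < k ∧ 0 < ℓ ∧ ℓ < p ^ k ∧
      ν * w = (p ^ k - 1) * ℓ ∧
      digitSum p (ν * w) = digitSum p ν * digitSum p w

open Finset Polynomial

theorem digitSum_add_le {p : ℕ} (hp : p.Prime) (a b : ℕ) :
    digitSum p (a + b) ≤ digitSum p a + digitSum p b := by
  -- Legendre: `(p - 1) * v_p(n!) = n - s_p(n)`, and `a! * b! ∣ (a + b)!`.
  have := Fact.mk hp
  have hval : padicValNat p (a.factorial * b.factorial) ≤ padicValNat p (a + b).factorial :=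
    (padicValNat_dvd_iff_le (Nat.factorial_ne_zero _)).1
      (pow_padicValNat_dvd.trans (Nat.factorial_mul_factorial_dvd_factorial_add a b))
  rw [padicValNat.mul (Nat.factorial_ne_zero _) (Nat.factorial_ne_zero _)] at hval
  have hab := sub_one_mul_padicValNat_factorial (p := p) (a + b)
  have ha := sub_one_mul_padicValNat_factorial (p := p) a
  have hb := sub_one_mul_padicValNat_factorial (p := p) b
  have := Nat.mul_le_mul_left (p - 1) hval
  have := Nat.digit_sum_le p a
  have := Nat.digit_sum_le p b
  have := Nat.digit_sum_le p (a + b)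
  unfold digitSum
  rw [mul_add] at *
  omega

theorem digitSum_lt_self {p n : ℕ} (hp : p.Prime) (hn : p ≤ n) : digitSum p n < n := by
  have := Fact.mk hp
  have hval : 1 ≤ padicValNat p n.factorial :=
    one_le_padicValNat_of_dvd (Nat.factorial_ne_zero n) (Nat.dvd_factorial hp.pos hn)
  have h := sub_one_mul_padicValNat_factorial (p := p) n
  have := Nat.mul_le_mul_left (p - 1) hval
  have := hp.two_le
  have := Nat.digit_sum_le p n
  unfold digitSum
  omega

theorem digitSum_pow_mul {p : ℕ} (hp : 1 < p) (e n : ℕ) :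
    digitSum p (p ^ e * n) = digitSum p n := by
  rcases Nat.eq_zero_or_pos n with rfl | hn
  · simp
  · simp [digitSum, Nat.digits_base_pow_mul hp hn]

def digitRev (b n : ℕ) : ℕ := Nat.ofDigits b (Nat.digits b n).reverse

theorem digits_digitRev {b n : ℕ} (hb : 1 < b) (hbn : ¬ b ∣ n) :
    Nat.digits b (digitRev b n) = (Nat.digits b n).reverse := by
  have hn : n ≠ 0 := by rintro rfl; exact hbn (dvd_zero b)
  refine Nat.digits_ofDigits b hb _ (fun d hd => Nat.digits_lt_base hb (List.mem_reverse.1 hd))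
    fun _ => ?_
  simp only [List.getLast_reverse, Nat.digits_def' hb (Nat.pos_of_ne_zero hn), List.head_cons]
  exact fun h => hbn (Nat.dvd_of_mod_eq_zero h)

theorem digitRev_digitRev {b n : ℕ} (hb : 1 < b) (hbn : ¬ b ∣ n) :
    digitRev b (digitRev b n) = n := by
  rw [digitRev, digits_digitRev hb hbn, List.reverse_reverse, Nat.ofDigits_digits]

theorem digitSum_digitRev {b n : ℕ} (hb : 1 < b) (hbn : ¬ b ∣ n) :
    digitSum b (digitRev b n) = digitSum b n := by
  rw [digitSum, digits_digitRev hb hbn, List.sum_reverse, digitSum]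

theorem not_dvd_digitRev {b n : ℕ} (hb : 1 < b) (hn : n ≠ 0) : ¬ b ∣ digitRev b n := by
  have hne : Nat.digits b n ≠ [] := Nat.digits_ne_nil_iff_ne_zero.2 hn
  rw [Nat.dvd_iff_mod_eq_zero, digitRev, Nat.ofDigits_mod_eq_head!, List.head!_eq_head?_getD,
    List.head?_reverse, List.getLast?_eq_some_getLast hne, Option.getD_some,
    Nat.mod_eq_of_lt (Nat.digits_lt_base hb (List.getLast_mem hne))]
  exact Nat.getLast_digit_ne_zero b hn

theorem one_lt_digitRev {b n : ℕ} (hb : 1 < b) (hn : 1 < n) (hbn : ¬ b ∣ n) :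
    1 < digitRev b n := by
  have h := digitRev_digitRev hb hbn
  by_contra! hle
  interval_cases digitRev b n
  all_goals simp [← h, digitRev, Nat.digits_of_lt b 1 one_ne_zero hb] at hn

theorem mod_add_mod_and_div_add_div_of_add_eq_mul_sub_one {x y M N : ℕ} (hM : 0 < M)
    (hN : 0 < N) (h : x + y = M * N - 1) :
    x % M + y % M = M - 1 ∧ x / M + y / M = N - 1 := by
  -- A carry out of the low part would force `x % M + y % M = 2 * M - 1`.
  have hxy : x + y = (M - 1) + M * (N - 1) := by
    rw [h, Nat.mul_sub_one]; have := Nat.le_mul_of_pos_right M hN; omega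
  have hmod : (x + y) % M = M - 1 := by
    rw [hxy, Nat.add_mul_mod_self_left, Nat.mod_eq_of_lt (by omega)]
  have hdiv : (x + y) / M = N - 1 := by
    rw [hxy, Nat.add_mul_div_left _ _ hM, Nat.div_eq_of_lt (by omega), zero_add]
  have hcarry := Nat.add_mod_add_ite x y M
  have hquot := Nat.add_div hM (a := x) (b := y)
  have := Nat.mod_lt x hM
  have := Nat.mod_lt y hM
  split_ifs at hcarry hquot with hc <;> omega

theorem digit_add_digit_eq_of_add_eq_pow_sub_one {b k x y i : ℕ} (hb : 0 < b)
    (h : x + y = b ^ k - 1) (hi : i < k) :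
    x / b ^ i % b + y / b ^ i % b = b - 1 := by
  have hk : b ^ k = b ^ i * (b * b ^ (k - i - 1)) := by
    rw [← pow_succ', ← pow_add]; congr 1; omega
  rw [hk] at h
  have h' := (mod_add_mod_and_div_add_div_of_add_eq_mul_sub_one (pow_pos hb i) (by positivity) h).2
  exact (mod_add_mod_and_div_add_div_of_add_eq_mul_sub_one hb (by positivity) h').1

def paddedDigitRev (b m x : ℕ) : ℕ := ∑ i ∈ range m, x / b ^ i % b * b ^ (m - 1 - i)

theorem ofDigits_reverse_eq_sum (b : ℕ) (L : List ℕ) :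
    Nat.ofDigits b L.reverse = ∑ i ∈ range L.length, L.getD i 0 * b ^ (L.length - 1 - i) := by
  induction L with
  | nil => simp
  | cons d L ih =>
    rw [Nat.ofDigits_reverse_cons, ih, List.length_cons, sum_range_succ']
    simp only [List.getD_cons_succ, List.getD_cons_zero, Nat.add_sub_cancel, Nat.sub_zero,
      mul_comm d]
    congr 1
    exact sum_congr rfl fun i _ => by rw [Nat.sub_sub, add_comm 1]

theorem paddedDigitRev_length_digits {b : ℕ} (hb : 2 ≤ b) (x : ℕ) :
    paddedDigitRev b (Nat.digits b x).length x = digitRev b x := by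
  rw [paddedDigitRev, digitRev, ofDigits_reverse_eq_sum]
  simp only [Nat.getD_digits _ _ hb]

theorem paddedDigitRev_add (b k l x : ℕ) :
    paddedDigitRev b (k + l) x =
      paddedDigitRev b k (x % b ^ k) * b ^ l + paddedDigitRev b l (x / b ^ k) := by
  rw [paddedDigitRev, sum_range_add, paddedDigitRev, paddedDigitRev, sum_mul]
  congr 1
  · refine sum_congr rfl fun i hi => ?_
    rw [mem_range] at hi
    have hdigit : x % b ^ k / b ^ i % b = x / b ^ i % b := by
      rw [← Nat.mod_mul_right_div_self, Nat.mod_mod_of_dvd, Nat.mod_mul_right_div_self]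
      rw [← pow_succ]; exact Nat.pow_dvd_pow b hi
    rw [hdigit, mul_assoc, ← pow_add]; congr 2; omega
  · refine sum_congr rfl fun i hi => ?_
    rw [Nat.div_div_eq_div_mul, ← pow_add]; congr 2; omega

theorem paddedDigitRev_eq_digitRev_mul_pow {b m x : ℕ} (hb : 2 ≤ b)
    (hm : (Nat.digits b x).length ≤ m) :
    paddedDigitRev b m x = digitRev b x * b ^ (m - (Nat.digits b x).length) := by
  obtain ⟨c, rfl⟩ := Nat.exists_eq_add_of_le hm
  rw [paddedDigitRev_add, Nat.mod_eq_of_lt (Nat.lt_base_pow_length_digits hb),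
    Nat.div_eq_of_lt (Nat.lt_base_pow_length_digits hb), paddedDigitRev_length_digits hb,
    Nat.add_sub_cancel_left]
  simp [paddedDigitRev]

theorem paddedDigitRev_add_paddedDigitRev {b k x y : ℕ} (hb : 0 < b) (h : x + y = b ^ k - 1) :
    paddedDigitRev b k x + paddedDigitRev b k y = b ^ k - 1 := by
  rw [paddedDigitRev, paddedDigitRev, ← sum_add_distrib]
  rw [sum_congr rfl fun i hi => by
    rw [← add_mul, digit_add_digit_eq_of_add_eq_pow_sub_one hb h (mem_range.1 hi)]]
  rw [← mul_sum, sum_range_reflect (fun i => b ^ i) k]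
  have := geom_sum_mul_add (b - 1) k
  rw [Nat.sub_one_add_one hb.ne'] at this
  rw [mul_comm]; omega

theorem coprime_pow_sub_one {b k : ℕ} (hb : 0 < b) (hk : 0 < k) :
    Nat.Coprime b (b ^ k - 1) := by
  have h : Nat.Coprime (b ^ k - 1 + 1) (b ^ k - 1) :=
    Nat.coprime_self_add_left.2 (Nat.coprime_one_left _)
  rw [Nat.sub_add_cancel (Nat.one_le_pow _ _ hb)] at h
  exact h.coprime_dvd_left (dvd_pow_self b hk.ne')

theorem exists_digitRev_pow_sub_one_mul {b k ℓ : ℕ} (hb : 2 ≤ b) (hk : 0 < k) (hℓ : 0 < ℓ)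
    (hℓk : ℓ < b ^ k) :
    ∃ ℓ', 0 < ℓ' ∧ ℓ' < b ^ k ∧ digitRev b ((b ^ k - 1) * ℓ) = (b ^ k - 1) * ℓ' := by
  set n := (b ^ k - 1) * ℓ with hn
  -- `n = (ℓ - 1) * b ^ k + (b ^ k - ℓ)`: its two blocks of `k` digits are complementary
  have hblocks : n % b ^ k + n / b ^ k = b ^ k - 1 := by
    obtain ⟨m, rfl⟩ : ∃ m, ℓ = m + 1 := ⟨ℓ - 1, by omega⟩
    obtain ⟨c, hc⟩ : ∃ c, b ^ k = m + c + 2 := ⟨b ^ k - m - 2, by omega⟩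
    have hn' : n = (c + 1) + b ^ k * m := by
      rw [hn, hc, show m + c + 2 - 1 = m + c + 1 by omega]; ring
    rw [hn', Nat.add_mul_mod_self_left, Nat.add_mul_div_left _ _ (by positivity),
      Nat.mod_eq_of_lt (by omega), Nat.div_eq_of_lt (by omega)]
    omega
  have hb0 : 0 < b := by omega
  have hpow : 2 ≤ b ^ k := hb.trans (Nat.le_self_pow hk.ne' b)
  obtain ⟨A, hA⟩ : ∃ A, paddedDigitRev b k (n % b ^ k) = A := ⟨_, rfl⟩
  obtain ⟨B, hB⟩ : ∃ B, paddedDigitRev b k (n / b ^ k) = B := ⟨_, rfl⟩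
  have hAB : A + B = b ^ k - 1 := hA ▸ hB ▸ paddedDigitRev_add_paddedDigitRev hb0 hblocks
  have hpad : paddedDigitRev b (k + k) n = (b ^ k - 1) * (A + 1) := by
    rw [paddedDigitRev_add, hA, hB, show b ^ k = A + B + 1 by omega, Nat.add_sub_cancel]
    ring
  have hlen : (Nat.digits b n).length ≤ k + k := by
    rw [Nat.digits_length_le_iff (by omega), pow_add]
    exact Nat.mul_lt_mul_of_le_of_lt (Nat.sub_le _ _) hℓk (by omega)
  have hrev : digitRev b n * b ^ (k + k - (Nat.digits b n).length) = (b ^ k - 1) * (A + 1) := by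
    rw [← paddedDigitRev_eq_digitRev_mul_pow hb hlen, hpad]
  set c := k + k - (Nat.digits b n).length
  obtain ⟨ℓ', hℓ'⟩ : b ^ c ∣ A + 1 := ((coprime_pow_sub_one hb0 hk).pow_left c).dvd_of_dvd_mul_left
    ⟨_, hrev.symm.trans (mul_comm _ _)⟩
  have hrevℓ' : digitRev b n = (b ^ k - 1) * ℓ' := by
    refine Nat.eq_of_mul_eq_mul_right (pow_pos hb0 c) ?_
    rw [hrev, hℓ']; ring
  have hn0 : n ≠ 0 := Nat.mul_ne_zero (by omega) (by omega)
  have hndvd : ¬ b ∣ ℓ' := fun h => not_dvd_digitRev (by omega) hn0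
    (hrevℓ' ▸ dvd_mul_of_dvd_right h _)
  have hle : ℓ' ≤ b ^ k := by
    have := Nat.le_mul_of_pos_left ℓ' (pow_pos hb0 c)
    omega
  refine ⟨ℓ', Nat.pos_of_ne_zero fun h0 => hndvd ?_, lt_of_le_of_ne hle fun h => hndvd ?_, hrevℓ'⟩
  · rw [h0]; exact dvd_zero b
  · rw [h]; exact dvd_pow_self b hk.ne'

theorem coeff_lt_of_digitSum_eval_eq {p : ℕ} (hp : p.Prime) {q : ℕ[X]}
    (h : digitSum p (q.eval p) = q.eval 1) (i : ℕ) : q.coeff i < p := by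
  -- `s(∑ c_j p^j) ≤ ∑ s(c_j) ≤ ∑ c_j`, the second inequality being strict if some `c_j ≥ p`.
  by_contra! hi
  have hiN : i ∈ range (q.natDegree + 1) := by
    by_contra hiN
    rw [coeff_eq_zero_of_natDegree_lt (by simp at hiN; omega)] at hi
    exact hp.ne_zero (Nat.le_zero.1 hi)
  have hsub := Finset.le_sum_of_subadditive (digitSum p) (by simp [digitSum])
    (digitSum_add_le hp) (range (q.natDegree + 1)) (fun j => q.coeff j * p ^ j)
  have hlt : ∑ j ∈ range (q.natDegree + 1), digitSum p (q.coeff j)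
      < ∑ j ∈ range (q.natDegree + 1), q.coeff j :=
    Finset.sum_lt_sum (fun j _ => Nat.digit_sum_le p _) ⟨i, hiN, digitSum_lt_self hp hi⟩
  have hterm (j : ℕ) : digitSum p (q.coeff j * p ^ j) = digitSum p (q.coeff j) := by
    rw [mul_comm, digitSum_pow_mul hp.one_lt]
  simp only [hterm] at hsub
  rw [eval_eq_sum_range, eval_eq_sum_range] at h
  simp only [one_pow, mul_one] at h
  omega

theorem coeff_ofDigits_X (L : List ℕ) (i : ℕ) :
    (Nat.ofDigits (X : ℕ[X]) L).coeff i = L.getD i 0 := by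
  induction L generalizing i with
  | nil => simp [Nat.ofDigits]
  | cons d L ih => cases i <;> simp [Nat.ofDigits, coeff_X_mul, ih, coeff_natCast_ite]

theorem eval_ofDigits_X (b : ℕ) (L : List ℕ) :
    (Nat.ofDigits (X : ℕ[X]) L).eval b = Nat.ofDigits b L := by
  induction L with
  | nil => simp [Nat.ofDigits]
  | cons d L ih => simp [Nat.ofDigits, ih]

theorem ofDigits_X_reverse (L : List ℕ) :
    Nat.ofDigits (X : ℕ[X]) L.reverse = (Nat.ofDigits X L).reflect (L.length - 1) := by
  ext i
  rw [coeff_reflect, coeff_ofDigits_X, coeff_ofDigits_X]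
  rcases lt_or_ge i L.length with hi | hi
  · rw [revAt_le (by omega), List.getD_eq_getElem _ _ (by simpa), List.getElem_reverse,
      List.getD_eq_getElem]
  · have hrev : L.length ≤ revAt (L.length - 1) i := by
      rcases le_or_gt i (L.length - 1) with h | h
      · rw [revAt_le h]; omega
      · rw [revAt_eq_self_of_lt h]; exact hi
    rw [List.getD_eq_default _ _ (by simpa), List.getD_eq_default _ _ hrev]

theorem natDegree_ofDigits_X_digits (b n : ℕ) :
    (Nat.ofDigits (X : ℕ[X]) (Nat.digits b n)).natDegree = (Nat.digits b n).length - 1 := by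
  rcases eq_or_ne n 0 with rfl | hn
  · simp [Nat.ofDigits]
  have hne : Nat.digits b n ≠ [] := Nat.digits_ne_nil_iff_ne_zero.2 hn
  refine natDegree_eq_of_le_of_coeff_ne_zero ?_ ?_
  · exact natDegree_le_iff_coeff_eq_zero.2 fun i hi =>
      by rw [coeff_ofDigits_X, List.getD_eq_default _ _ (by omega)]
  · rw [coeff_ofDigits_X, List.getD_eq_getElem _ _ (by simpa [List.length_pos_iff] using hne),
      ← List.getLast_eq_getElem hne]
    exact Nat.getLast_digit_ne_zero b hn

theorem ofDigits_X_digits_ne_zero {b n : ℕ} (hn : n ≠ 0) :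
    Nat.ofDigits (X : ℕ[X]) (Nat.digits b n) ≠ 0 := fun h => hn <| by
  rw [← Nat.ofDigits_digits b n, ← eval_ofDigits_X, h, eval_zero]

theorem digitRev_eq_eval_reflect (b n : ℕ) :
    digitRev b n = ((Nat.ofDigits (X : ℕ[X]) (Nat.digits b n)).reflect
      (Nat.ofDigits (X : ℕ[X]) (Nat.digits b n)).natDegree).eval b := by
  rw [natDegree_ofDigits_X_digits, ← ofDigits_X_reverse, eval_ofDigits_X, digitRev]

theorem ofDigits_X_digits_eval {b : ℕ} (hb : 1 < b) {q : ℕ[X]} (hq : ∀ i, q.coeff i < b) :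
    Nat.ofDigits X (Nat.digits b (q.eval b)) = q := by
  rcases eq_or_ne q 0 with rfl | hq0
  · simp [Nat.ofDigits]
  set L := (List.range (q.natDegree + 1)).map q.coeff
  have hL : Nat.ofDigits X L = q := by
    ext i
    rw [coeff_ofDigits_X]
    rcases lt_or_ge i (q.natDegree + 1) with hi | hi
    · simp [L, hi]
    · rw [List.getD_eq_default _ _ (by simpa [L] using hi), coeff_eq_zero_of_natDegree_lt hi]
  have hdigits : Nat.digits b (q.eval b) = L := by
    rw [← hL, eval_ofDigits_X]
    refine Nat.digits_ofDigits b hb L (by simp [L, hq]) fun _ => ?_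
    simpa [L, List.getLast_map, List.getLast_range] using hq0
  rw [hdigits, hL]

theorem digitRev_mul_of_digitSum_mul_eq {p a b : ℕ} (hp : p.Prime) (ha : a ≠ 0) (hb : b ≠ 0)
    (h : digitSum p (a * b) = digitSum p a * digitSum p b) :
    digitRev p (a * b) = digitRev p a * digitRev p b := by
  set f := Nat.ofDigits (X : ℕ[X]) (Nat.digits p a)
  set g := Nat.ofDigits (X : ℕ[X]) (Nat.digits p b)
  have heval (c : ℕ) : (f * g).eval c =
      Nat.ofDigits c (Nat.digits p a) * Nat.ofDigits c (Nat.digits p b) := by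
    rw [eval_mul, eval_ofDigits_X, eval_ofDigits_X]
  have hfg : Nat.ofDigits X (Nat.digits p (a * b)) = f * g := by
    have hevalp : (f * g).eval p = a * b := by rw [heval, Nat.ofDigits_digits, Nat.ofDigits_digits]
    rw [← hevalp]
    refine ofDigits_X_digits_eval hp.one_lt (coeff_lt_of_digitSum_eval_eq hp ?_)
    rw [hevalp, h, heval, Nat.ofDigits_one, Nat.ofDigits_one, digitSum, digitSum]
  rw [digitRev_eq_eval_reflect p (a * b), hfg,
    natDegree_mul (ofDigits_X_digits_ne_zero ha) (ofDigits_X_digits_ne_zero hb),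
    reflect_mul _ _ le_rfl le_rfl, eval_mul, digitRev_eq_eval_reflect, digitRev_eq_eval_reflect]

theorem IsPSymmetric.exists_witness_not_dvd {p ν : ℕ} (hp : p.Prime) (h : IsPSymmetric p ν) :
    ∃ w k ℓ : ℕ, ¬ p ∣ w ∧ 0 < k ∧ 0 < ℓ ∧ ℓ < p ^ k ∧ ν * w = (p ^ k - 1) * ℓ ∧
      digitSum p (ν * w) = digitSum p ν * digitSum p w := by
  obtain ⟨-, -, w, k, ℓ, hw, hk, hℓ, hℓk, hmul, hsum⟩ := h
  obtain ⟨e, w₀, hpw₀, rfl⟩ := Nat.exists_eq_pow_mul_and_not_dvd hw.ne' p hp.ne_one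
  obtain ⟨ℓ₀, rfl⟩ : p ^ e ∣ ℓ := ((coprime_pow_sub_one hp.pos hk).pow_left e).dvd_of_dvd_mul_left
    ⟨ν * w₀, by rw [← hmul, mul_left_comm]⟩
  have hℓ₀ : 0 < ℓ₀ := Nat.pos_of_ne_zero (by rintro rfl; simp at hℓ)
  refine ⟨w₀, k, ℓ₀, hpw₀, hk, hℓ₀, ?_, ?_, ?_⟩
  · exact (Nat.le_mul_of_pos_left ℓ₀ (pow_pos hp.pos e)).trans_lt hℓk
  · refine Nat.eq_of_mul_eq_mul_left (pow_pos hp.pos e) ?_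
    rw [mul_left_comm, hmul, mul_left_comm]
  · rwa [mul_left_comm, digitSum_pow_mul hp.one_lt, digitSum_pow_mul hp.one_lt] at hsum

theorem pSymmetric_digit_reversal (p ν : ℕ) (hp : p.Prime)
    (h : IsPSymmetric p ν) :
    IsPSymmetric p (Nat.ofDigits p (Nat.digits p ν).reverse) := by
  change IsPSymmetric p (digitRev p ν)
  obtain ⟨w, k, ℓ, hpw, hk, hℓ, hℓk, hmul, hsum⟩ := h.exists_witness_not_dvd hp
  have hpν : ¬ p ∣ ν := hp.coprime_iff_not_dvd.1 h.2.1.symm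
  have hpνw : ¬ p ∣ ν * w := hp.prime.not_dvd_mul hpν hpw
  have hν0 : ν ≠ 0 := by rintro rfl; exact hpν (dvd_zero p)
  have hw0 : w ≠ 0 := by rintro rfl; exact hpw (dvd_zero p)
  have hrev := digitRev_mul_of_digitSum_mul_eq hp hν0 hw0 hsum
  obtain ⟨ℓ', hℓ', hℓ'k, hrevℓ⟩ := exists_digitRev_pow_sub_one_mul hp.two_le hk hℓ hℓk
  refine ⟨one_lt_digitRev hp.one_lt h.1 hpν,
    (hp.coprime_iff_not_dvd.2 (not_dvd_digitRev hp.one_lt hν0)).symm,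
    digitRev p w, k, ℓ',
    Nat.pos_of_ne_zero fun h0 => not_dvd_digitRev hp.one_lt hw0 (h0 ▸ dvd_zero p),
    hk, hℓ', hℓ'k, ?_, ?_⟩
  · rw [← hrev, hmul, hrevℓ]
  · rw [← hrev, digitSum_digitRev hp.one_lt hpνw, digitSum_digitRev hp.one_lt hpν,
      digitSum_digitRev hp.one_lt hpw, hsum]
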